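/- arXiv:1703.02960 — 7 statements merged into one kernel-verified Lean document; each statement's English description precedes it below -/
import Mathlib

section
/- Let V be an n×n complex matrix that is a partial isometry, and let ζ be an eigenvalue of V with |ζ| = 1. Then the algebraic multiplicity of ζ as an eigenvalue of V equals its geometric multiplicity. -/
open Matrix

def IsPartialIsometry {n : Type*} [Fintype n] (V : Matrix n n ℂ) : Prop :=
  V * Vᴴ * V = V

def MatrixSimilar {n : Type*} [Fintype n] [DecidableEq n] (A B : Matrix n n ℂ) : Prop :=
  ∃ S : Matrix n n ℂ, IsUnit S ∧ A = S * B * S⁻¹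

noncomputable def nullity {n : Type*} [Fintype n] (A : Matrix n n ℂ) : ℕ :=
  Module.finrank ℂ (LinearMap.ker A.mulVecLin)

noncomputable def algMult {n : Type*} [Fintype n] [DecidableEq n]
    (A : Matrix n n ℂ) (lam : ℂ) : ℕ :=
  A.charpoly.rootMultiplicity lam

noncomputable def geoMult {n : Type*} [Fintype n] [DecidableEq n]
    (A : Matrix n n ℂ) (lam : ℂ) : ℕ :=
  nullity (A - lam • 1)

def jordanBlock (m : ℕ) (μ : ℂ) : Matrix (Fin m) (Fin m) ℂ :=
  Matrix.of fun i j => if (i : ℕ) = (j : ℕ) then μ else if (i : ℕ) + 1 = (j : ℕ) then 1 else 0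

/-! If `V` is a partial isometry, `V Vᴴ` is the orthogonal projection onto the range of `V`, and an
eigenvector `y` of `V` for a unimodular eigenvalue `ζ` lies in that range; this forces `Vᴴ y = ζ̄ y`.
Consequently the range of `V - ζ` is orthogonal to `ker (V - ζ)`, so `ker (V - ζ)² = ker (V - ζ)`:
the generalized eigenspace of `ζ`, whose dimension is the algebraic multiplicity, is the eigenspace. -/

namespace Module.End

variable {R M : Type*} [CommRing R] [AddCommGroup M] [Module R M]

lemma maxGenEigenspace_eq_eigenspace_of_genEigenspace_two_le {f : End R M} {μ : R}
    (h : f.genEigenspace μ 2 ≤ f.eigenspace μ) : f.maxGenEigenspace μ = f.eigenspace μ := by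
  refine le_antisymm ?_ eigenspace_le_maxGenEigenspace
  rw [maxGenEigenspace, genEigenspace_top]
  refine iSup_le fun k => ?_
  induction k with
  | zero => simp
  | succ k ih =>
    intro x hx
    rw [genEigenspace_nat, LinearMap.mem_ker, pow_succ, mul_apply] at hx
    have hx' : (f - μ • 1) x ∈ f.eigenspace μ := ih (by rwa [genEigenspace_nat])
    apply h
    rw [← Nat.cast_ofNat, genEigenspace_nat, LinearMap.mem_ker, pow_two, mul_apply]
    rwa [eigenspace_def, LinearMap.mem_ker] at hx'

end Module.End

section Multiplicity

variable {m : Type*} [Fintype m] [DecidableEq m]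

lemma algMult_eq_finrank_maxGenEigenspace (A : Matrix m m ℂ) (μ : ℂ) :
    algMult A μ = Module.finrank ℂ (Module.End.maxGenEigenspace A.mulVecLin μ) := by
  rw [algMult, LinearMap.finrank_maxGenEigenspace_eq, Matrix.charpoly_mulVecLin]

lemma geoMult_eq_finrank_eigenspace (A : Matrix m m ℂ) (μ : ℂ) :
    geoMult A μ = Module.finrank ℂ (Module.End.eigenspace A.mulVecLin μ) := by
  have hker : LinearMap.ker (A - μ • 1).mulVecLin = Module.End.eigenspace A.mulVecLin μ := by
    ext x
    simp [sub_eq_zero]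
  rw [geoMult, nullity, hker]

end Multiplicity

namespace IsPartialIsometry

variable {m : Type*} [Fintype m] {V : Matrix m m ℂ} {ζ : ℂ}

open ComplexOrder

lemma conjTranspose_mulVec_eq_smul (hV : IsPartialIsometry V) (hζ : ‖ζ‖ = 1) {y : m → ℂ}
    (hy : V *ᵥ y = ζ • y) : Vᴴ *ᵥ y = star ζ • y := by
  have hζ' : star ζ * ζ = 1 := by
    rw [Complex.star_def, Complex.conj_mul', hζ]
    norm_num
  have hy_range : V *ᵥ (star ζ • y) = y := by
    rw [mulVec_smul, hy, smul_smul, hζ', one_smul]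
  have hproj : V *ᵥ (Vᴴ *ᵥ y) = y := by
    rw [← hy_range, mulVec_mulVec, mulVec_mulVec, hV]
  have h₁ : star (Vᴴ *ᵥ y) ⬝ᵥ (Vᴴ *ᵥ y) = star y ⬝ᵥ y := by
    rw [star_mulVec, ← dotProduct_mulVec, conjTranspose_conjTranspose, hproj]
  have h₂ : star (Vᴴ *ᵥ y) ⬝ᵥ y = ζ * (star y ⬝ᵥ y) := by
    rw [star_mulVec, ← dotProduct_mulVec, conjTranspose_conjTranspose, hy, dotProduct_smul,
      smul_eq_mul]
  have h₃ : star y ⬝ᵥ (Vᴴ *ᵥ y) = star ζ * (star y ⬝ᵥ y) := by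
    rw [dotProduct_mulVec, ← star_mulVec, hy, star_smul, smul_dotProduct, smul_eq_mul]
  rw [← sub_eq_zero, ← dotProduct_star_self_eq_zero]
  simp only [star_sub, star_smul, star_star, sub_dotProduct, dotProduct_sub, smul_dotProduct,
    dotProduct_smul, smul_eq_mul, h₁, h₂, h₃]
  linear_combination -(star y ⬝ᵥ y) * hζ'

lemma genEigenspace_two_le_eigenspace (hV : IsPartialIsometry V) (hζ : ‖ζ‖ = 1) :
    Module.End.genEigenspace V.mulVecLin ζ 2 ≤ Module.End.eigenspace V.mulVecLin ζ := by
  intro x hx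
  rw [← Nat.cast_ofNat, Module.End.mem_genEigenspace_nat, LinearMap.mem_ker, pow_two,
    Module.End.mul_apply] at hx
  rw [Module.End.mem_eigenspace_iff, mulVecLin_apply, ← sub_eq_zero]
  set y := V *ᵥ x - ζ • x with hy_def
  have hy : V *ᵥ y = ζ • y := by
    simpa [sub_eq_zero, ← hy_def] using hx
  rw [← dotProduct_star_self_eq_zero]
  calc star y ⬝ᵥ y = star y ⬝ᵥ (V *ᵥ x) - ζ * (star y ⬝ᵥ x) := by
        rw [hy_def, dotProduct_sub, dotProduct_smul, smul_eq_mul]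
    _ = star (Vᴴ *ᵥ y) ⬝ᵥ x - ζ * (star y ⬝ᵥ x) := by
        rw [star_mulVec, conjTranspose_conjTranspose, dotProduct_mulVec]
    _ = 0 := by
        rw [hV.conjTranspose_mulVec_eq_smul hζ hy, star_smul, star_star, smul_dotProduct,
          smul_eq_mul, sub_self]

end IsPartialIsometry

theorem partial_isometry_unimodular_eigenvalue_mult_eq_general {n : ℕ}
    (V : Matrix (Fin n) (Fin n) ℂ) (hV : IsPartialIsometry V)
    (ζ : ℂ) (hmod : ‖ζ‖ = 1) :
    algMult V ζ = geoMult V ζ := by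
  rw [algMult_eq_finrank_maxGenEigenspace, geoMult_eq_finrank_eigenspace,
    Module.End.maxGenEigenspace_eq_eigenspace_of_genEigenspace_two_le
      (hV.genEigenspace_two_le_eigenspace hmod)]

theorem partial_isometry_unimodular_eigenvalue_mult_eq {n : ℕ}
    (V : Matrix (Fin n) (Fin n) ℂ) (hV : IsPartialIsometry V)
    (ζ : ℂ) (hζ : ζ ∈ spectrum ℂ V) (hmod : ‖ζ‖ = 1) :
    algMult V ζ = geoMult V ζ :=
  partial_isometry_unimodular_eigenvalue_mult_eq_general V hV ζ hmod
end

section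
/- Let V be an n×n complex matrix that is a partial isometry, and let λ be a complex number with |λ| < 1. Then rank(V − λI) ≥ rank(V); equivalently, the nullity of V is at least the nullity of V − λI. -/
open Matrix

def MatSimilar {n : Type*} [Fintype n] [DecidableEq n] (A B : Matrix n n ℂ) : Prop :=
  ∃ S : Matrix n n ℂ, IsUnit S ∧ A = S * B * S⁻¹

/-!
Since `V * Vᴴ * V = V`, the matrix `1 - Vᴴ * V` is killed by `V`, so it maps the
`lam`-eigenspace of `V` into `ker V`. It is injective there: a vector `x` with `Vᴴ * V *ᵥ x = x`
has `‖V x‖ = ‖x‖`, which for `V x = lam • x` forces `x = 0` unless `‖lam‖ = 1`.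
Rank–nullity turns the resulting nullity inequality into the rank inequality.
-/

theorem Submodule.finrank_le_finrank_of_mapsTo_of_disjoint_ker {K M N : Type*} [Field K]
    [AddCommGroup M] [Module K M] [AddCommGroup N] [Module K N] [FiniteDimensional K N]
    {p : Submodule K M} {q : Submodule K N} (f : M →ₗ[K] N) (hpq : ∀ x ∈ p, f x ∈ q)
    (hker : Disjoint p (LinearMap.ker f)) :
    Module.finrank K p ≤ Module.finrank K q := by
  refine LinearMap.finrank_le_finrank_of_injective (f := f.restrict hpq) ?_
  rw [injective_iff_map_eq_zero]
  intro x hx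
  exact Subtype.ext <| (Submodule.disjoint_def.mp hker) x x.2 (congrArg Subtype.val hx)

theorem Matrix.rank_add_nullity {ι : Type*} [Fintype ι] (A : Matrix ι ι ℂ) :
    A.rank + nullity A = Fintype.card ι := by
  rw [Matrix.rank, nullity, LinearMap.finrank_range_add_finrank_ker,
    Module.finrank_fintype_fun_eq_card]

theorem Matrix.star_mulVec_dotProduct_mulVec {𝕜 m n : Type*} [RCLike 𝕜] [Fintype m] [Fintype n]
    (A : Matrix m n 𝕜) (x : n → 𝕜) :
    star (A *ᵥ x) ⬝ᵥ (A *ᵥ x) = star x ⬝ᵥ ((Aᴴ * A) *ᵥ x) := by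
  rw [← mulVec_mulVec, star_mulVec, ← dotProduct_mulVec]

open scoped ComplexOrder in
theorem Matrix.eq_zero_of_mulVec_eq_smul_of_conjTranspose_mul_self_mulVec_eq
    {𝕜 ι : Type*} [RCLike 𝕜] [Fintype ι] {A : Matrix ι ι 𝕜} {x : ι → 𝕜} {lam : 𝕜}
    (hlam : ‖lam‖ ≠ 1) (heig : A *ᵥ x = lam • x) (hfix : (Aᴴ * A) *ᵥ x = x) : x = 0 := by
  have hnorm : (‖lam‖ : 𝕜) ^ 2 * (star x ⬝ᵥ x) = star x ⬝ᵥ x := by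
    have := A.star_mulVec_dotProduct_mulVec x
    rwa [hfix, heig, star_smul, smul_dotProduct, dotProduct_smul, smul_smul, smul_eq_mul,
      RCLike.star_def, RCLike.conj_mul] at this
  have hsq : (‖lam‖ : 𝕜) ^ 2 ≠ 1 := by
    rw [Ne, ← RCLike.ofReal_pow, ← RCLike.ofReal_one, RCLike.ofReal_inj]
    exact fun h => hlam (by nlinarith [norm_nonneg lam])
  refine dotProduct_star_self_eq_zero.mp ?_
  by_contra hx
  exact hsq (mul_right_cancel₀ hx (hnorm.trans (one_mul _).symm))

theorem IsPartialIsometry.mul_one_sub_conjTranspose_mul_self {ι : Type*} [Fintype ι]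
    [DecidableEq ι] {V : Matrix ι ι ℂ} (hV : IsPartialIsometry V) : V * (1 - Vᴴ * V) = 0 := by
  rw [Matrix.mul_sub, mul_one, ← mul_assoc, hV, sub_self]

theorem IsPartialIsometry.nullity_sub_smul_one_le {ι : Type*} [Fintype ι] [DecidableEq ι]
    {V : Matrix ι ι ℂ} (hV : IsPartialIsometry V) {lam : ℂ} (hlam : ‖lam‖ ≠ 1) :
    nullity (V - lam • 1) ≤ nullity V := by
  refine Submodule.finrank_le_finrank_of_mapsTo_of_disjoint_ker (1 - Vᴴ * V).mulVecLin
    (fun x _ => ?_) (Submodule.disjoint_def.mpr fun x hx hx' => ?_)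
  · simp only [LinearMap.mem_ker, mulVecLin_apply, mulVec_mulVec,
      hV.mul_one_sub_conjTranspose_mul_self, zero_mulVec]
  · simp only [LinearMap.mem_ker, mulVecLin_apply, sub_mulVec, one_mulVec, smul_mulVec,
      sub_eq_zero] at hx hx'
    exact eq_zero_of_mulVec_eq_smul_of_conjTranspose_mul_self_mulVec_eq hlam hx hx'.symm

theorem partial_isometry_rank_le {n : ℕ}
    (V : Matrix (Fin n) (Fin n) ℂ) (hV : IsPartialIsometry V)
    (lam : ℂ) (hlam : ‖lam‖ < 1) :
    V.rank ≤ (V - lam • 1).rank ∧ nullity (V - lam • 1) ≤ nullity V := by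
  have hnullity := hV.nullity_sub_smul_one_le hlam.ne
  have hV_rank := V.rank_add_nullity
  have hshift_rank := (V - lam • 1).rank_add_nullity
  exact ⟨by omega, hnullity⟩
end

section
/- Let n ≥ 2 and let ξ₁, ξ₂, …, ξ_{n−1} be complex numbers with |ξᵢ| < 1 for all i. Then there exists an n×n upper triangular complex matrix V such that: (a) V is a partial isometry; (b) the first column of V is zero; (c) the diagonal of V is (0, ξ₁, ξ₂, …, ξ_{n−1}); (d) every entry of V on the first superdiagonal (the entries V(i, i+1) for 1 ≤ i ≤ n−1) is nonzero. -/
open Matrix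

/-! Put `x = (0, ξ₁, …, ξₘ)`, `d k = √(1 - ‖x k‖²)` and `u j = d j ∏_{k<j} (-conj (x k))`.
The upper triangular matrix `V` with diagonal `x` and entries `d i d j ∏_{i<k<j} (-conj (x k))`
above it satisfies `(Vᴴ V) a b = δ a b - conj (u a) * u b`: the sum defining `(Vᴴ V) a b`
telescopes, because `d i ² = 1 - ‖x i‖²`. As `x 0 = 0`, `u` is the first unit vector, so `Vᴴ V`
is a projection and `V` is a partial isometry; its superdiagonal entries `d i d (i+1)` do not
vanish since `‖ξ i‖ < 1`. -/

open Finset ComplexConjugate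

open scoped ComplexOrder in
theorem isPartialIsometry_of_isIdempotentElem {n : Type*} [Fintype n] {V : Matrix n n ℂ}
    (h : IsIdempotentElem (Vᴴ * V)) : IsPartialIsometry V := by
  classical
  have h0 : (Vᴴ * V) * (Vᴴ * V - 1) = 0 := by rw [Matrix.mul_sub, h.eq, Matrix.mul_one, sub_self]
  rw [conjTranspose_mul_self_mul_eq_zero, Matrix.mul_sub, Matrix.mul_one, sub_eq_zero] at h0
  rw [IsPartialIsometry, Matrix.mul_assoc, h0]

theorem sum_one_sub_mul_prod_Ico {R : Type*} [CommRing R] (y : ℕ → R) (a : ℕ) :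
    ∑ i ∈ range a, (1 - y i) * ∏ k ∈ Ico (i + 1) a, y k = 1 - ∏ k ∈ range a, y k := by
  induction a with
  | zero => simp
  | succ a ih =>
    have hterm : ∀ i ∈ range a, (1 - y i) * ∏ k ∈ Ico (i + 1) (a + 1), y k
        = (1 - y i) * (∏ k ∈ Ico (i + 1) a, y k) * y a := fun i hi => by
      rw [prod_Ico_succ_top (by simpa using hi), mul_assoc]
    rw [sum_range_succ, sum_congr rfl hterm, ← sum_mul, ih, prod_range_succ, Ico_self,
      prod_empty]
    ring

theorem conj_prod_neg_conj_mul_self (x : ℕ → ℂ) (s : Finset ℕ) :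
    conj (∏ k ∈ s, -conj (x k)) * ∏ k ∈ s, -conj (x k) = ∏ k ∈ s, (‖x k‖ ^ 2 : ℂ) := by
  rw [map_prod, ← prod_mul_distrib]
  refine prod_congr rfl fun k _ => ?_
  rw [map_neg, Complex.conj_conj, neg_mul_neg, Complex.mul_conj']

namespace CompressedShift

variable (x : ℕ → ℂ)

noncomputable def defect (k : ℕ) : ℂ := (√(1 - ‖x k‖ ^ 2) : ℝ)

/-- Entries of the compressed shift on the model space of the Blaschke product with zeros `x k`,
in the Takenaka–Malmquist basis. -/
noncomputable def entry (i j : ℕ) : ℂ :=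
  if i = j then x j
  else if i < j then defect x i * defect x j * ∏ k ∈ Ico (i + 1) j, -conj (x k)
  else 0

noncomputable def defectRow (j : ℕ) : ℂ := defect x j * ∏ k ∈ range j, -conj (x k)

variable {x}

theorem conj_defect (k : ℕ) : conj (defect x k) = defect x k := Complex.conj_ofReal _

theorem defect_sq {k : ℕ} (hk : ‖x k‖ ≤ 1) : defect x k ^ 2 = 1 - ‖x k‖ ^ 2 := by
  rw [defect, ← Complex.ofReal_pow, Real.sq_sqrt (by nlinarith [norm_nonneg (x k)])]
  push_cast; ring

theorem defect_ne_zero {k : ℕ} (hk : ‖x k‖ < 1) : defect x k ≠ 0 := by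
  rw [defect, Complex.ofReal_ne_zero, Real.sqrt_ne_zero']
  nlinarith [norm_nonneg (x k)]

theorem entry_self (j : ℕ) : entry x j j = x j := if_pos rfl

theorem entry_of_lt {i j : ℕ} (h : i < j) :
    entry x i j = defect x i * defect x j * ∏ k ∈ Ico (i + 1) j, -conj (x k) := by
  rw [entry, if_neg h.ne, if_pos h]

theorem entry_of_gt {i j : ℕ} (h : j < i) : entry x i j = 0 := by
  rw [entry, if_neg h.ne', if_neg h.not_gt]

theorem conj_entry_mul_entry {i a b : ℕ} (hia : i < a) (hab : a ≤ b) :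
    conj (entry x i a) * entry x i b
      = defect x i ^ 2 * (∏ k ∈ Ico (i + 1) a, (‖x k‖ ^ 2 : ℂ)) *
          (defect x a * defect x b * ∏ k ∈ Ico a b, -conj (x k)) := by
  rw [entry_of_lt hia, entry_of_lt (hia.trans_le hab),
    ← prod_Ico_consecutive _ (Nat.succ_le_of_lt hia) hab,
    ← conj_prod_neg_conj_mul_self, map_mul, map_mul, conj_defect, conj_defect]
  ring

theorem sum_range_conj_entry_mul_entry (hx : ∀ k, ‖x k‖ ≤ 1) {a b : ℕ} (hab : a ≤ b) :
    ∑ i ∈ range a, conj (entry x i a) * entry x i b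
      = (1 - ∏ k ∈ range a, (‖x k‖ ^ 2 : ℂ)) *
          (defect x a * defect x b * ∏ k ∈ Ico a b, -conj (x k)) := by
  rw [← sum_one_sub_mul_prod_Ico, sum_mul]
  refine sum_congr rfl fun i hi => ?_
  rw [conj_entry_mul_entry (mem_range.1 hi) hab, defect_sq (hx i)]

theorem defect_mul_add_conj_mul_entry (hx : ∀ k, ‖x k‖ ≤ 1) {a b : ℕ} (hab : a ≤ b) :
    defect x a * defect x b * ∏ k ∈ Ico a b, -conj (x k) + conj (x a) * entry x a b
      = if a = b then 1 else 0 := by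
  rcases hab.eq_or_lt with rfl | hlt
  · rw [if_pos rfl, Ico_self, prod_empty, entry_self, Complex.conj_mul', ← sq,
      defect_sq (hx a)]
    ring
  · rw [if_neg hlt.ne, entry_of_lt hlt, prod_eq_prod_Ico_succ_bot hlt]
    ring

theorem conj_defectRow_mul_defectRow {a b : ℕ} (hab : a ≤ b) :
    conj (defectRow x a) * defectRow x b
      = (∏ k ∈ range a, (‖x k‖ ^ 2 : ℂ)) *
          (defect x a * defect x b * ∏ k ∈ Ico a b, -conj (x k)) := by
  rw [defectRow, defectRow, ← prod_range_mul_prod_Ico _ hab, ← conj_prod_neg_conj_mul_self,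
    map_mul, conj_defect]
  ring

theorem sum_range_succ_conj_entry_mul_entry_of_le (hx : ∀ k, ‖x k‖ ≤ 1) {a b : ℕ} (hab : a ≤ b) :
    ∑ i ∈ range (a + 1), conj (entry x i a) * entry x i b
      = (if a = b then 1 else 0) - conj (defectRow x a) * defectRow x b := by
  rw [sum_range_succ, sum_range_conj_entry_mul_entry hx hab, entry_self,
    ← defect_mul_add_conj_mul_entry hx hab, conj_defectRow_mul_defectRow hab]
  ring

theorem sum_conj_entry_mul_entry (hx : ∀ k, ‖x k‖ ≤ 1) {a b N : ℕ} (ha : a < N)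
    (hb : b < N) :
    ∑ i ∈ range N, conj (entry x i a) * entry x i b
      = (if a = b then 1 else 0) - conj (defectRow x a) * defectRow x b := by
  wlog hab : a ≤ b generalizing a b
  · have h := congrArg conj (this hb ha (le_of_not_ge hab))
    simp only [map_sum, map_sub, map_mul, Complex.conj_conj, apply_ite conj, map_one, map_zero]
      at h
    simpa only [mul_comm, eq_comm] using h
  rw [← sum_range_succ_conj_entry_mul_entry_of_le hx hab]
  refine (sum_subset (range_subset_range.2 ha) fun i _ hi => ?_).symm
  rw [entry_of_gt (by simpa using hi), map_zero, zero_mul]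

theorem entry_zero_right (hx0 : x 0 = 0) (i : ℕ) : entry x i 0 = 0 := by
  rcases i.eq_zero_or_pos with rfl | hi
  · rw [entry_self, hx0]
  · exact entry_of_gt hi

theorem entry_add_one_ne_zero {i : ℕ} (hi : ‖x i‖ < 1) (hi' : ‖x (i + 1)‖ < 1) :
    entry x i (i + 1) ≠ 0 := by
  rw [entry_of_lt i.lt_succ_self, Ico_self, prod_empty, mul_one]
  exact mul_ne_zero (defect_ne_zero hi) (defect_ne_zero hi')

theorem defectRow_of_zero (hx0 : x 0 = 0) (j : ℕ) : defectRow x j = if j = 0 then 1 else 0 := by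
  rcases j.eq_zero_or_pos with rfl | hj
  · simp [defectRow, defect, hx0]
  · rw [defectRow, prod_eq_zero (mem_range.2 hj) (by rw [hx0, map_zero, neg_zero]),
      if_neg hj.ne', mul_zero]

variable (x) in
noncomputable def matrix (N : ℕ) : Matrix (Fin N) (Fin N) ℂ := of fun i j => entry x i j

theorem conjTranspose_matrix_mul_self (hx : ∀ k, ‖x k‖ ≤ 1) (N : ℕ) :
    (matrix x N)ᴴ * matrix x N
      = 1 - vecMulVec (star fun j : Fin N => defectRow x j) fun j : Fin N => defectRow x j := by
  ext a b
  simp only [mul_apply, conjTranspose_apply, matrix, of_apply, RCLike.star_def]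
  rw [Fin.sum_univ_eq_sum_range (fun i => conj (entry x i a) * entry x i b),
    sum_conj_entry_mul_entry hx a.isLt b.isLt, Matrix.sub_apply, one_apply, vecMulVec_apply]
  simp [Fin.val_inj]

theorem isPartialIsometry_matrix (hx : ∀ k, ‖x k‖ ≤ 1) (hx0 : x 0 = 0) (N : ℕ) :
    IsPartialIsometry (matrix x (N + 1)) := by
  have hrow : (fun j : Fin (N + 1) => defectRow x j) = Pi.single 0 1 := by
    ext j
    by_cases hj : j = 0 <;> simp [hj, defectRow_of_zero hx0]
  apply isPartialIsometry_of_isIdempotentElem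
  rw [conjTranspose_matrix_mul_self hx, hrow, ← Pi.single_star, star_one,
    ← single_eq_single_vecMulVec_single]
  refine IsIdempotentElem.one_sub ?_
  rw [IsIdempotentElem, single_mul_single_same, one_mul]

end CompressedShift

theorem exists_upper_triangular_partial_isometry_general {m : ℕ}
    (ξ : Fin m → ℂ) (hξ : ∀ i, ‖ξ i‖ < 1) :
    ∃ V : Matrix (Fin (m + 1)) (Fin (m + 1)) ℂ,
      IsPartialIsometry V ∧
      (∀ i j : Fin (m + 1), (j : ℕ) < (i : ℕ) → V i j = 0) ∧
      (∀ i, V i 0 = 0) ∧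
      V 0 0 = 0 ∧
      (∀ i : Fin m, V i.succ i.succ = ξ i) ∧
      (∀ i : Fin m, V i.castSucc i.succ ≠ 0) := by
  set x : ℕ → ℂ := fun k => if h : k < m + 1 then (Fin.cons 0 ξ : Fin (m + 1) → ℂ) ⟨k, h⟩ else 0
    with x_def
  have hx0 : x 0 = 0 := by simp [x_def]
  have hx_succ (i : Fin m) : x (i + 1) = ξ i := by simp [x_def, ← Fin.succ_mk]
  have hx (k : ℕ) : ‖x k‖ < 1 := by
    rcases k with _ | k
    · simp [hx0]
    · by_cases hk : k < m
      · simpa only [hx_succ ⟨k, hk⟩] using hξ ⟨k, hk⟩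
      · simp [x_def, hk]
  refine ⟨CompressedShift.matrix x (m + 1),
    CompressedShift.isPartialIsometry_matrix (fun k => (hx k).le) hx0 m,
    fun i j => CompressedShift.entry_of_gt, fun i => CompressedShift.entry_zero_right hx0 i,
    CompressedShift.entry_zero_right hx0 0, fun i => ?_,
    fun i => CompressedShift.entry_add_one_ne_zero (hx i) (hx _)⟩
  exact (CompressedShift.entry_self _).trans (hx_succ i)

theorem exists_upper_triangular_partial_isometry {m : ℕ} (hm : 1 ≤ m)
    (ξ : Fin m → ℂ) (hξ : ∀ i, ‖ξ i‖ < 1) :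
    ∃ V : Matrix (Fin (m + 1)) (Fin (m + 1)) ℂ,
      IsPartialIsometry V ∧
      (∀ i j : Fin (m + 1), (j : ℕ) < (i : ℕ) → V i j = 0) ∧
      (∀ i, V i 0 = 0) ∧
      V 0 0 = 0 ∧
      (∀ i : Fin m, V i.succ i.succ = ξ i) ∧
      (∀ i : Fin m, V i.castSucc i.succ ≠ 0) :=
  exists_upper_triangular_partial_isometry_general ξ hξ
end

section
/- Let A be an m×m complex matrix and B an k×k complex matrix such that A and B have no common eigenvalue, and let C be any m×k complex matrix. Then the block upper triangular matrix with diagonal blocks A, B and upper-right block C is similar to the block diagonal matrix A ⊕ B; that is, fromBlocks A C 0 B is similar to fromBlocks A 0 0 B. -/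
/-!
Choose `X` with `X * B - A * X = C`; then `fromBlocks 1 X 0 1` conjugates `fromBlocks A 0 0 B`
into `fromBlocks A C 0 B`. Such an `X` exists because the Sylvester map `X ↦ X * B - A * X` is
injective: if `A * X = X * B`, then `p(A) * X = X * p(B)` for every polynomial `p`, and for the
characteristic polynomial `p` of `B` this reads `p(A) * X = 0`, where `p(A)` is invertible by the
spectral mapping theorem since no eigenvalue of `A` is a root of `p`.
-/

open Matrix

open Polynomial

namespace Matrix

variable {m n : Type*} [Fintype m] [Fintype n]

section Sylvester

variable {K : Type*} [Field K]

variable (K) in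
def sylvesterMap (A : Matrix m m K) (B : Matrix n n K) : Matrix m n K →ₗ[K] Matrix m n K :=
  mulRightLinearMap m K B - mulLeftLinearMap n K A

theorem sylvesterMap_apply (A : Matrix m m K) (B : Matrix n n K) (X : Matrix m n K) :
    sylvesterMap K A B X = X * B - A * X := rfl

end Sylvester

variable [DecidableEq m] [DecidableEq n]

theorem aeval_mul_eq_mul_aeval {R : Type*} [CommSemiring R] {A : Matrix m m R}
    {B : Matrix n n R} {X : Matrix m n R} (hX : A * X = X * B) (p : R[X]) :
    aeval A p * X = X * aeval B p := by
  induction p using Polynomial.induction_on with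
  | C c => simp [Algebra.algebraMap_eq_smul_one]
  | add p q hp hq => simp only [map_add, Matrix.add_mul, Matrix.mul_add, hp, hq]
  | monomial k c ih =>
    simp only [_root_.map_mul, map_pow, aeval_X, aeval_C] at ih ⊢
    rw [pow_succ, pow_succ, ← Matrix.mul_assoc, Matrix.mul_assoc _ A X, hX,
      ← Matrix.mul_assoc, ih, Matrix.mul_assoc, Matrix.mul_assoc]

section IsAlgClosed

variable {K : Type*} [Field K] [IsAlgClosed K] {A : Matrix m m K} {B : Matrix n n K}

theorem isUnit_aeval_charpoly_of_disjoint_spectrum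
    (h : Disjoint (spectrum K A) (spectrum K B)) : IsUnit (aeval A B.charpoly) := by
  nontriviality Matrix m m K
  rw [← spectrum.zero_notMem_iff K, spectrum.map_polynomial_aeval_of_nonempty _ _
    (spectrum.nonempty_of_isAlgClosed_of_finiteDimensional K A)]
  rintro ⟨μ, hμA, hμ⟩
  exact h.notMem_of_mem_left hμA (mem_spectrum_iff_isRoot_charpoly.mpr hμ)

theorem eq_zero_of_mul_eq_mul_of_disjoint_spectrum
    (h : Disjoint (spectrum K A) (spectrum K B)) {X : Matrix m n K} (hX : A * X = X * B) :
    X = 0 := by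
  have hpX : aeval A B.charpoly * X = 0 := by
    rw [aeval_mul_eq_mul_aeval hX, aeval_self_charpoly, Matrix.mul_zero]
  have hdet := (isUnit_iff_isUnit_det _).mp (isUnit_aeval_charpoly_of_disjoint_spectrum h)
  calc X = (aeval A B.charpoly)⁻¹ * (aeval A B.charpoly * X) :=
        (nonsing_inv_mul_cancel_left _ X hdet).symm
    _ = 0 := by rw [hpX, Matrix.mul_zero]

theorem sylvesterMap_bijective (h : Disjoint (spectrum K A) (spectrum K B)) :
    Function.Bijective (sylvesterMap K A B) := by
  have hinj : Function.Injective (sylvesterMap K A B) := by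
    rw [← LinearMap.ker_eq_bot, LinearMap.ker_eq_bot']
    intro X hX
    rw [sylvesterMap_apply, sub_eq_zero] at hX
    exact eq_zero_of_mul_eq_mul_of_disjoint_spectrum h hX.symm
  exact ⟨hinj, LinearMap.injective_iff_surjective.mp hinj⟩

theorem exists_mul_sub_mul_eq_of_disjoint_spectrum (h : Disjoint (spectrum K A) (spectrum K B))
    (C : Matrix m n K) : ∃ X : Matrix m n K, X * B - A * X = C :=
  (sylvesterMap_bijective h).2 C

end IsAlgClosed

theorem isUnit_fromBlocks_one_zero_one {R : Type*} [CommRing R] (X : Matrix m n R) :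
    IsUnit (fromBlocks (1 : Matrix m m R) X 0 (1 : Matrix n n R)) := by
  simp [isUnit_iff_isUnit_det]

theorem fromBlocks_mul_fromBlocks_one_zero_one {R : Type*} [Ring R] {A : Matrix m m R}
    {B : Matrix n n R} {C X : Matrix m n R} (hX : X * B - A * X = C) :
    fromBlocks A C 0 B * fromBlocks 1 X 0 1 = fromBlocks 1 X 0 1 * fromBlocks A 0 0 B := by
  simp [fromBlocks_multiply, ← hX]

end Matrix

theorem matSimilar_of_mul_eq_mul {n : Type*} [Fintype n] [DecidableEq n]
    {A B S : Matrix n n ℂ} (hS : IsUnit S) (h : A * S = S * B) : MatSimilar A B :=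
  ⟨S, hS, by rw [← h, mul_nonsing_inv_cancel_right _ _ ((isUnit_iff_isUnit_det S).mp hS)]⟩

theorem block_triangular_similar_block_diagonal {m k : ℕ}
    (A : Matrix (Fin m) (Fin m) ℂ) (B : Matrix (Fin k) (Fin k) ℂ)
    (h : ∀ μ : ℂ, ¬(μ ∈ spectrum ℂ A ∧ μ ∈ spectrum ℂ B))
    (C : Matrix (Fin m) (Fin k) ℂ) :
    MatSimilar (Matrix.fromBlocks A C 0 B) (Matrix.fromBlocks A 0 0 B) := by
  obtain ⟨X, hX⟩ := exists_mul_sub_mul_eq_of_disjoint_spectrum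
    (Set.disjoint_left.mpr fun μ hA hB => h μ ⟨hA, hB⟩) C
  exact matSimilar_of_mul_eq_mul (isUnit_fromBlocks_one_zero_one X)
    (fromBlocks_mul_fromBlocks_one_zero_one hX)
end

section
/- Let p be a monic complex polynomial of degree n ≥ 2 such that every root of p lies in the closed unit disk and p(0) = 0. Then there exists an n×n complex matrix V that is a partial isometry and whose characteristic polynomial equals p. -/
open Matrix

/-! Induction on the nonzero roots, starting from the `1 × 1` zero matrix. If `W` is a singular
partial isometry and `|a| ≤ 1`, pick `x ∈ ker W` with `‖x‖² = 1 - |a|²`; then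
`V = [[W, 0], [x*, a]]` has `V V* = diag(W W*, 1)`, hence `V V* V = V`, and
`charpoly V = charpoly W · (X - a)`. The root `0` is never lost, so the next `W` is again
singular. -/

open Polynomial

section

variable {m n : Type*} [Fintype m] [Fintype n]

theorem IsPartialIsometry.reindex {V : Matrix m m ℂ} (hV : IsPartialIsometry V) (e : m ≃ n) :
    IsPartialIsometry (reindex e e V) := by
  rw [IsPartialIsometry, conjTranspose_reindex, reindex_apply, reindex_apply,
    submatrix_mul_equiv, submatrix_mul_equiv, hV]

theorem IsPartialIsometry.fromBlocks_zero₁₂ [DecidableEq n] {W : Matrix m m ℂ} {B : Matrix n m ℂ}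
    {A : Matrix n n ℂ} (hW : IsPartialIsometry W) (hWB : W * Bᴴ = 0)
    (hBA : B * Bᴴ + A * Aᴴ = 1) : IsPartialIsometry (fromBlocks W 0 B A) := by
  have hBW : B * Wᴴ = 0 := by rw [← conjTranspose_conjTranspose B, ← conjTranspose_mul, hWB,
    conjTranspose_zero]
  unfold IsPartialIsometry at hW ⊢
  simp [fromBlocks_conjTranspose, fromBlocks_multiply, hW, hWB, hBW, hBA]

theorem exists_mulVec_eq_zero_sum_normSq_eq [DecidableEq n] {W : Matrix n n ℂ} (hW : W.det = 0)
    {r : ℝ} (hr : 0 ≤ r) : ∃ x, W *ᵥ x = 0 ∧ ∑ j, Complex.normSq (x j) = r := by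
  obtain ⟨v, hv0, hv⟩ := exists_mulVec_eq_zero_iff.mpr hW
  have hpos : 0 < ∑ j, Complex.normSq (v j) := by
    obtain ⟨j, hj⟩ := Function.ne_iff.mp hv0
    exact Finset.sum_pos' (fun k _ => Complex.normSq_nonneg _)
      ⟨j, Finset.mem_univ _, Complex.normSq_pos.mpr hj⟩
  refine ⟨(Real.sqrt (r / ∑ j, Complex.normSq (v j)) : ℂ) • v, by rw [mulVec_smul, hv, smul_zero],
    ?_⟩
  simp only [Pi.smul_apply, smul_eq_mul, Complex.normSq_mul, Complex.normSq_ofReal,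
    ← Finset.mul_sum]
  rw [Real.mul_self_sqrt (by positivity), div_mul_cancel₀ _ hpos.ne']

theorem IsPartialIsometry.exists_charpoly_eq_mul_X_sub_C [DecidableEq m] {W : Matrix m m ℂ}
    (hW : IsPartialIsometry W) (hdet : W.det = 0) {a : ℂ} (ha : ‖a‖ ≤ 1) :
    ∃ V : Matrix (m ⊕ Fin 1) (m ⊕ Fin 1) ℂ,
      IsPartialIsometry V ∧ V.charpoly = W.charpoly * (X - C a) := by
  have hr : 0 ≤ 1 - Complex.normSq a := by
    rw [Complex.normSq_eq_norm_sq, sub_nonneg]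
    exact pow_le_one₀ (norm_nonneg a) ha
  obtain ⟨x, hx, hxr⟩ := exists_mulVec_eq_zero_sum_normSq_eq hdet hr
  refine ⟨fromBlocks W 0 (of fun _ j => star (x j)) (diagonal fun _ => a),
    hW.fromBlocks_zero₁₂ ?_ ?_, ?_⟩
  · ext i k
    simpa [mul_apply, mulVec, dotProduct] using congrFun hx i
  · ext i k
    have hxr' : ∑ j, (starRingEnd ℂ) (x j) * x j = 1 - Complex.normSq a := by
      simp only [mul_comm (starRingEnd ℂ _), Complex.mul_conj]
      exact_mod_cast hxr
    obtain rfl := Subsingleton.elim i k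
    simp [mul_apply, hxr', Complex.mul_conj]
  · rw [charpoly_fromBlocks_zero₁₂, charpoly_diagonal, Fin.prod_univ_one]

end

theorem exists_isPartialIsometry_charpoly_eq_X_mul_prod (s : Multiset ℂ)
    (hs : ∀ z ∈ s, ‖z‖ ≤ 1) :
    ∃ V : Matrix (Fin (Multiset.card s + 1)) (Fin (Multiset.card s + 1)) ℂ,
      IsPartialIsometry V ∧ V.charpoly = X * (s.map fun z => X - C z).prod := by
  induction s using Multiset.induction_on with
  | empty =>
    refine ⟨0, by rw [IsPartialIsometry, Matrix.zero_mul, Matrix.zero_mul], ?_⟩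
    rw [charpoly_zero, Fintype.card_fin, Multiset.card_zero, Multiset.map_zero,
      Multiset.prod_zero, zero_add, pow_one, mul_one]
  | cons a t ih =>
    obtain ⟨W, hW, hWp⟩ := ih fun z hz => hs z (Multiset.mem_cons_of_mem hz)
    have hdet : W.det = 0 := by rw [det_eq_sign_charpoly_coeff, hWp, coeff_X_mul_zero, mul_zero]
    obtain ⟨V, hV, hVp⟩ :=
      hW.exists_charpoly_eq_mul_X_sub_C hdet (hs a (Multiset.mem_cons_self a t))
    rw [Multiset.card_cons]
    refine ⟨reindex finSumFinEquiv finSumFinEquiv V, hV.reindex _, ?_⟩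
    rw [charpoly_reindex, hVp, hWp, Multiset.map_cons, Multiset.prod_cons]
    ring

theorem exists_partial_isometry_with_charpoly_general (n : ℕ)
    (p : Polynomial ℂ) (hmonic : p.Monic) (hdeg : p.natDegree = n)
    (hroots : ∀ z : ℂ, p.IsRoot z → ‖z‖ ≤ 1)
    (h0 : p.eval 0 = 0) :
    ∃ V : Matrix (Fin n) (Fin n) ℂ, IsPartialIsometry V ∧ V.charpoly = p := by
  have hp0 : p ≠ 0 := hmonic.ne_zero
  have h0mem : (0 : ℂ) ∈ p.roots := (mem_roots hp0).mpr h0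
  have hcard : Multiset.card (p.roots.erase 0) + 1 = n := by
    rw [Multiset.card_erase_add_one h0mem, IsAlgClosed.card_roots_eq_natDegree, hdeg]
  subst hcard
  obtain ⟨V, hV, hVp⟩ := exists_isPartialIsometry_charpoly_eq_X_mul_prod (p.roots.erase 0)
    fun z hz => hroots z ((mem_roots hp0).mp (Multiset.mem_of_mem_erase hz))
  refine ⟨V, hV, ?_⟩
  conv_rhs => rw [← prod_multiset_X_sub_C_of_monic_of_roots_card_eq hmonic
    IsAlgClosed.card_roots_eq_natDegree, ← Multiset.cons_erase h0mem]
  rw [hVp, Multiset.map_cons, Multiset.prod_cons, C_0, sub_zero]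

theorem exists_partial_isometry_with_charpoly (n : ℕ) (hn : 2 ≤ n)
    (p : Polynomial ℂ) (hmonic : p.Monic) (hdeg : p.natDegree = n)
    (hroots : ∀ z : ℂ, p.IsRoot z → ‖z‖ ≤ 1)
    (h0 : p.eval 0 = 0) :
    ∃ V : Matrix (Fin n) (Fin n) ℂ, IsPartialIsometry V ∧ V.charpoly = p :=
  exists_partial_isometry_with_charpoly_general n p hmonic hdeg hroots h0
end

section
/- An n×n complex matrix T satisfies T Tᴴ T = T² if and only if T = PQ for some n×n orthogonal projection matrices P and Q (i.e., matrices satisfying P = Pᴴ = P² and Q = Qᴴ = Q²). -/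
open Matrix

/-!
If `P` and `Q` are orthogonal projections then `(PQ)ᴴ = QP`, so `PQ (PQ)ᴴ PQ = P Q P P Q = (PQ)²`.
Conversely, let `P` project onto the range of `T` and `Q` onto the range of `Tᴴ`. Since
`ker T = (range Tᴴ)ᗮ` we have `TQ = T`, and for `v = Tᴴ y` the vector `v - Tv` is killed by `Tᴴ`
(this is the adjoint identity `Tᴴ T Tᴴ = (Tᴴ)²`), so it lies in `(range T)ᗮ`; hence `Pv = Tv` and
`PQ = TQ = T`.
-/

open scoped InnerProduct

theorem IsStarProjection.mul_mul_star_mul_eq_sq {R : Type*} [Monoid R] [StarMul R] {p q : R}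
    (hp : IsStarProjection p) (hq : IsStarProjection q) :
    p * q * star (p * q) * (p * q) = (p * q) ^ 2 := by
  rw [star_mul, hp.isSelfAdjoint.star_eq, hq.isSelfAdjoint.star_eq, sq]
  calc p * q * (q * p) * (p * q) = p * (q * q) * (p * p) * q := by simp only [mul_assoc]
    _ = p * q * (p * q) := by rw [hp.isIdempotentElem.eq, hq.isIdempotentElem.eq, mul_assoc]

namespace ContinuousLinearMap

variable {𝕜 E : Type*} [RCLike 𝕜] [NormedAddCommGroup E] [InnerProductSpace 𝕜 E] [CompleteSpace E]

theorem apply_starProjection_range_adjoint (f : E →L[𝕜] E)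
    [f†.range.HasOrthogonalProjection] (x : E) :
    f (f†.range.starProjection x) = f x := by
  have hker : x - f†.range.starProjection x ∈ f.ker := by
    simpa [orthogonal_range] using Submodule.sub_starProjection_mem_orthogonal (K := f†.range) x
  rwa [LinearMap.mem_ker, map_sub, sub_eq_zero, eq_comm] at hker

theorem starProjection_range_apply_of_mem_range_adjoint {f : E →L[𝕜] E}
    [f.range.HasOrthogonalProjection] (h : f * f† * f = f ^ 2) {v : E}
    (hv : v ∈ f†.range) : f.range.starProjection v = f v := by
  obtain ⟨y, rfl⟩ := hv
  refine Submodule.eq_starProjection_of_mem_orthogonal ⟨_, rfl⟩ ?_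
  have h' : f† * f * f† = f† ^ 2 := by
    simpa only [star_eq_adjoint, star_mul, star_pow, adjoint_adjoint, mul_assoc] using
      congrArg star h
  rw [orthogonal_range, LinearMap.mem_ker, map_sub]
  simpa [sq, sub_eq_zero] using (congrArg (· y) h').symm

theorem eq_starProjection_range_mul_starProjection_range_adjoint {f : E →L[𝕜] E}
    [f.range.HasOrthogonalProjection] [f†.range.HasOrthogonalProjection]
    (h : f * f† * f = f ^ 2) :
    f = f.range.starProjection * f†.range.starProjection := by
  ext x
  rw [mul_apply_eq_comp, starProjection_range_apply_of_mem_range_adjoint h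
    (Submodule.starProjection_apply_mem _ x), apply_starProjection_range_adjoint]

end ContinuousLinearMap

theorem Matrix.isStarProjection_iff_conjTranspose {n 𝕜 : Type*} [Fintype n] [RCLike 𝕜]
    {P : Matrix n n 𝕜} : IsStarProjection P ↔ P = Pᴴ ∧ P * P = P := by
  rw [isStarProjection_iff', and_comm, star_eq_conjTranspose, eq_comm (a := Pᴴ)]

theorem solution_iff_product_of_projections {n : ℕ} (T : Matrix (Fin n) (Fin n) ℂ) :
    T * Tᴴ * T = T ^ 2 ↔
      ∃ P Q : Matrix (Fin n) (Fin n) ℂ,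
        P = Pᴴ ∧ P * P = P ∧ Q = Qᴴ ∧ Q * Q = Q ∧ T = P * Q := by
  constructor
  · intro h
    let φ : Matrix (Fin n) (Fin n) ℂ ≃⋆ₐ[ℂ] _ := toEuclideanCLM
    have hf : φ T * (φ T)† * φ T = φ T ^ 2 := by
      rw [← ContinuousLinearMap.star_eq_adjoint, ← map_star, ← map_mul, ← map_mul, ← map_pow,
        star_eq_conjTranspose, h]
    obtain ⟨hP, hP2⟩ := isStarProjection_iff_conjTranspose.mp
      ((isStarProjection_starProjection (U := (φ T).range)).map φ.symm.toStarAlgHom)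
    obtain ⟨hQ, hQ2⟩ := isStarProjection_iff_conjTranspose.mp
      ((isStarProjection_starProjection (U := (φ T)†.range)).map φ.symm.toStarAlgHom)
    refine ⟨_, _, hP, hP2, hQ, hQ2, ?_⟩
    rw [← map_mul, ← ContinuousLinearMap.eq_starProjection_range_mul_starProjection_range_adjoint hf]
    exact (φ.symm_apply_apply T).symm
  · rintro ⟨P, Q, hP, hP2, hQ, hQ2, rfl⟩
    exact (isStarProjection_iff_conjTranspose.mpr ⟨hP, hP2⟩).mul_mul_star_mul_eq_sq
      (isStarProjection_iff_conjTranspose.mpr ⟨hQ, hQ2⟩)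
end

section
/- An n×n complex matrix A is similar to a Hermitian matrix if and only if A = P H for some positive definite n×n matrix P and some Hermitian n×n matrix H. -/
open Matrix

/-!
If `A = S H S⁻¹` with `H` Hermitian, then `A = (S Sᴴ) ((S⁻¹)ᴴ H S⁻¹)`, a positive definite matrix
times a Hermitian one. Conversely, if `A = P H`, write `P = S S` with `S` the positive definite
square root of `P`; then `A = S (S H S) S⁻¹` is similar to the Hermitian matrix `S H S`.
-/

namespace Matrix

variable {n R 𝕜 : Type*} [Fintype n] [DecidableEq n]

lemma mul_mul_inv_eq_mul_conjTranspose_mul [CommRing R] [StarRing R] {S : Matrix n n R}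
    (hS : IsUnit S) (H : Matrix n n R) :
    S * H * S⁻¹ = S * Sᴴ * (S⁻¹ᴴ * H * S⁻¹) := by
  have hdet : IsUnit Sᴴ.det := (isUnit_iff_isUnit_det _).mp ((isUnit_conjTranspose S).mpr hS)
  rw [conjTranspose_nonsing_inv, ← Matrix.mul_assoc (S * Sᴴ), ← Matrix.mul_assoc (S * Sᴴ),
    mul_nonsing_inv_cancel_right _ _ hdet]

lemma mul_self_mul_eq_mul_mul_inv [CommRing R] {S : Matrix n n R} (hS : IsUnit S)
    (H : Matrix n n R) : S * S * H = S * (S * H * S) * S⁻¹ := by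
  rw [← Matrix.mul_assoc, mul_nonsing_inv_cancel_right _ _ ((isUnit_iff_isUnit_det S).mp hS),
    Matrix.mul_assoc]

open scoped ComplexOrder in
lemma posDef_mul_conjTranspose_self_of_isUnit [RCLike 𝕜] {S : Matrix n n 𝕜} (hS : IsUnit S) :
    (S * Sᴴ).PosDef :=
  PosDef.mul_conjTranspose_self S (vecMul_injective_iff_isUnit.mpr hS)

open scoped ComplexOrder MatrixOrder in
lemma PosDef.exists_posDef_mul_self_eq [RCLike 𝕜] {P : Matrix n n 𝕜} (hP : P.PosDef) :
    ∃ S : Matrix n n 𝕜, S.PosDef ∧ S * S = P :=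
  ⟨CFC.sqrt P, (hP.isStrictlyPositive.sqrt).posDef, CFC.sqrt_mul_sqrt_self P hP.posSemidef.nonneg⟩

open scoped ComplexOrder in
lemma MatSimilar.exists_posDef_mul_isHermitian {A H : Matrix n n ℂ} (hH : H.IsHermitian)
    (hAH : MatSimilar A H) :
    ∃ P K : Matrix n n ℂ, P.PosDef ∧ K.IsHermitian ∧ A = P * K := by
  obtain ⟨S, hS, rfl⟩ := hAH
  exact ⟨S * Sᴴ, S⁻¹ᴴ * H * S⁻¹, posDef_mul_conjTranspose_self_of_isUnit hS,
    isHermitian_conjTranspose_mul_mul _ hH, mul_mul_inv_eq_mul_conjTranspose_mul hS H⟩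

open scoped ComplexOrder in
lemma PosDef.exists_matSimilar_mul_isHermitian {P H : Matrix n n ℂ} (hP : P.PosDef)
    (hH : H.IsHermitian) : ∃ K : Matrix n n ℂ, K.IsHermitian ∧ MatSimilar (P * H) K := by
  obtain ⟨S, hS, rfl⟩ := hP.exists_posDef_mul_self_eq
  refine ⟨S * H * S, ?_, S, hS.isUnit, mul_self_mul_eq_mul_mul_inv hS.isUnit H⟩
  simpa only [hS.isHermitian.eq] using isHermitian_conjTranspose_mul_mul S hH

end Matrix

open scoped ComplexOrder in
theorem similar_to_hermitian_iff_posdef_mul_hermitian {n : ℕ}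
    (A : Matrix (Fin n) (Fin n) ℂ) :
    (∃ H : Matrix (Fin n) (Fin n) ℂ, H = Hᴴ ∧ MatSimilar A H) ↔
      ∃ (P H : Matrix (Fin n) (Fin n) ℂ), P.PosDef ∧ H = Hᴴ ∧ A = P * H := by
  constructor
  · rintro ⟨H, hH, hAH⟩
    obtain ⟨P, K, hP, hK, hA⟩ := hAH.exists_posDef_mul_isHermitian hH.symm
    exact ⟨P, K, hP, hK.symm, hA⟩
  · rintro ⟨P, H, hP, hH, rfl⟩
    obtain ⟨K, hK, hsim⟩ := hP.exists_matSimilar_mul_isHermitian hH.symm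
    exact ⟨K, hK.symm, hsim⟩
end
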